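/- Let à be the Kashaev operator on L²(ℝ) given by the kernel (Ãf)(β) = ∫_ℝ e^{2πiαβ} e^{πiβ² - πi/12} f(α) dα on Gaussian test functions. Then Ã³ = id; equivalently, the threefold composition of the integral kernel e^{2πiαβ+πiβ²-πi/12} with itself (using regularized Fresnel integrals) is the identity kernel δ(α-β). -/

import Mathlib

open MeasureTheory Real Complex

/-- The Gaussian-polynomial test class `W`. -/
def InW (f : ℝ → ℂ) : Prop :=
  f ∈ Submodule.span ℂ {g : ℝ → ℂ | ∃ (A : ℝ) (B : ℂ) (P : Polynomial ℂ), 0 < A ∧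
    g = fun x : ℝ => Complex.exp (-(A : ℂ) * (x : ℂ) ^ 2 / 2 + B * x) * P.eval (x : ℂ)}

/-- Kashaev's operator `Ã`: `(Ãf)(β) = ∫ e^{2πiαβ} e^{πiβ² - πi/12} f(α) dα`. -/
noncomputable def Atil (f : ℝ → ℂ) : ℝ → ℂ := fun β =>
  ∫ α : ℝ, Complex.exp (2 * (π : ℂ) * Complex.I * α * β) *
    Complex.exp ((π : ℂ) * Complex.I * (β : ℂ) ^ 2 - (π : ℂ) * Complex.I / 12) * f α

/-!
Write `X` for multiplication by the coordinate and `D` for `d/dx`. Since `Ã` is a chirp times the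
inverse Fourier transform, it satisfies `Ã X = L Ã` with `L = (2πi)⁻¹ D - X`, and `Ã D = -2πi X Ã`;
together these give `Ã L = -(2πi)⁻¹ D Ã`, hence `Ã³ X = X Ã³` on the span of the functions
`xⁿ e^{bx² + cx}` (`Re b < 0`), which `Ã` preserves. It therefore suffices to treat the Gaussians
`e^{bx² + cx}`. `Ã` maps each of them to a multiple of a Gaussian, acting on the width by the
Möbius map `b ↦ πi + π²/b`, which has order three. Along an orbit the exponential factors cancel
and the three square roots multiply to `e^{πi/4}`, which cancels the three phases `e^{-πi/12}`.
-/

open FourierTransform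

def mulX : (ℝ → ℂ) →ₗ[ℂ] ℝ → ℂ := LinearMap.mulLeft ℂ fun x : ℝ => (x : ℂ)

@[simp] lemma mulX_apply (f : ℝ → ℂ) (x : ℝ) : mulX f x = x * f x := rfl

lemma hasDerivAt_fourierInv {f : ℝ → ℂ} (hf : Integrable f) (hxf : Integrable (mulX f))
    (w : ℝ) : HasDerivAt (𝓕⁻ f) (2 * π * I * 𝓕⁻ (mulX f) w) w := by
  have h := (Real.hasDerivAt_fourier hf (by simpa [Complex.real_smul] using! hxf) (-w)).scomp w
    (hasDerivAt_neg w)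
  have hneg : ∀ g : ℝ → ℂ, 𝓕⁻ g = fun w => 𝓕 g (-w) :=
    fun g => funext (Real.fourierInv_eq_fourier_neg g)
  rw [hneg, hneg]
  refine h.congr_deriv ?_
  simp only [Real.fourier_real_eq_integral_exp_smul, smul_eq_mul, Complex.real_smul]
  rw [← integral_const_mul, ← integral_const_mul]
  congr 1 with x
  push_cast
  simp only [mulX_apply]
  ring

lemma fourierInv_deriv {f : ℝ → ℂ} (hf : Integrable f) (hdf : Differentiable ℝ f)
    (hf' : Integrable (deriv f)) (w : ℝ) :
    𝓕⁻ (deriv f) w = -(2 * π * I * w) * 𝓕⁻ f w := by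
  rw [Real.fourierInv_eq_fourier_neg, Real.fourierInv_eq_fourier_neg,
    Real.fourier_deriv hf hdf hf']
  simp [smul_eq_mul]

lemma Atil_eq_mul_fourierInv (f : ℝ → ℂ) (β : ℝ) :
    Atil f β = cexp (π * I * β ^ 2 - π * I / 12) * 𝓕⁻ f β := by
  rw [Atil, Real.fourierInv_eq', ← integral_const_mul]
  congr 1 with α
  simp only [Real.inner_apply, smul_eq_mul]
  push_cast
  ring_nf

lemma integrable_Atil_integrand {f : ℝ → ℂ} (hf : Integrable f) (β : ℝ) :
    Integrable fun α : ℝ => cexp (2 * π * I * α * β) *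
      cexp (π * I * β ^ 2 - π * I / 12) * f α := by
  refine hf.bdd_mul (c := 1) (by fun_prop) (ae_of_all _ fun α => le_of_eq ?_)
  rw [norm_mul, Complex.norm_exp, Complex.norm_exp]
  simp [← Complex.ofReal_pow]

lemma Atil_add {f g : ℝ → ℂ} (hf : Integrable f) (hg : Integrable g) :
    Atil (f + g) = Atil f + Atil g := by
  funext β
  simp only [Atil, Pi.add_apply, mul_add]
  exact integral_add (integrable_Atil_integrand hf β) (integrable_Atil_integrand hg β)

lemma Atil_sub {f g : ℝ → ℂ} (hf : Integrable f) (hg : Integrable g) :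
    Atil (f - g) = Atil f - Atil g := by
  funext β
  simp only [Atil, Pi.sub_apply, mul_sub]
  exact integral_sub (integrable_Atil_integrand hf β) (integrable_Atil_integrand hg β)

lemma Atil_smul (a : ℂ) (f : ℝ → ℂ) : Atil (a • f) = a • Atil f := by
  funext β
  simp only [Atil, Pi.smul_apply, smul_eq_mul, ← integral_const_mul]
  congr 1 with α
  ring

lemma Atil_zero : Atil 0 = 0 := by
  simpa using Atil_smul 0 0

lemma hasDerivAt_Atil {f : ℝ → ℂ} (hf : Integrable f) (hxf : Integrable (mulX f)) (β : ℝ) :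
    HasDerivAt (Atil f) (2 * π * I * (Atil (mulX f) β + β * Atil f β)) β := by
  have hchirp : HasDerivAt (fun β : ℝ => cexp (π * I * β ^ 2 - π * I / 12))
      (cexp (π * I * β ^ 2 - π * I / 12) * (2 * π * I * β)) β := by
    have := ((hasDerivAt_pow 2 (β : ℂ)).const_mul (π * I : ℂ) |>.sub_const (π * I / 12 : ℂ)
      |>.cexp).comp_ofReal
    convert this using 1
    ring
  rw [Atil_eq_mul_fourierInv (mulX f), show Atil f = _ from funext (Atil_eq_mul_fourierInv f)]
  refine (hchirp.fun_mul (hasDerivAt_fourierInv hf hxf β)).congr_deriv ?_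
  ring

lemma Atil_mulX {f : ℝ → ℂ} (hf : Integrable f) (hxf : Integrable (mulX f)) :
    Atil (mulX f) = (2 * π * I)⁻¹ • deriv (Atil f) - mulX (Atil f) := by
  funext β
  have h2πI : (2 * π * I : ℂ) ≠ 0 := by simp [Real.pi_ne_zero]
  rw [Pi.sub_apply, Pi.smul_apply, smul_eq_mul, mulX_apply, (hasDerivAt_Atil hf hxf β).deriv]
  field_simp
  ring

lemma Atil_deriv {f : ℝ → ℂ} (hf : Integrable f) (hdf : Differentiable ℝ f)
    (hf' : Integrable (deriv f)) : Atil (deriv f) = -(2 * π * I) • mulX (Atil f) := by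
  funext β
  rw [Atil_eq_mul_fourierInv, fourierInv_deriv hf hdf hf', Pi.smul_apply, mulX_apply,
    Atil_eq_mul_fourierInv, smul_eq_mul]
  ring

noncomputable def gaussMonomial (n : ℕ) (b c : ℂ) (x : ℝ) : ℂ := x ^ n * cexp (b * x ^ 2 + c * x)

def gaussPoly : Submodule ℂ (ℝ → ℂ) :=
  Submodule.span ℂ {f | ∃ n b c, b.re < 0 ∧ gaussMonomial n b c = f}

lemma gaussMonomial_mem {b : ℂ} (hb : b.re < 0) (n : ℕ) (c : ℂ) :
    gaussMonomial n b c ∈ gaussPoly :=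
  Submodule.subset_span ⟨n, b, c, hb, rfl⟩

lemma mulX_gaussMonomial (n : ℕ) (b c : ℂ) :
    mulX (gaussMonomial n b c) = gaussMonomial (n + 1) b c := by
  funext x
  simp only [mulX_apply, gaussMonomial]
  ring

lemma mulX_mem_gaussPoly {f : ℝ → ℂ} (hf : f ∈ gaussPoly) : mulX f ∈ gaussPoly := by
  refine (Submodule.span_le (p := gaussPoly.comap mulX)).2 ?_ hf
  rintro _ ⟨n, b, c, hb, rfl⟩
  rw [SetLike.mem_coe, Submodule.mem_comap, mulX_gaussMonomial]
  exact gaussMonomial_mem hb _ _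

lemma integrable_gaussMonomial {b : ℂ} (hb : b.re < 0) (n : ℕ) (c : ℂ) :
    Integrable (gaussMonomial n b c) := by
  have hmax : ∀ x : ℝ, b.re / 2 * x ^ 2 + c.re * x ≤ -c.re ^ 2 / (2 * b.re) := by
    intro x
    rw [le_div_iff_of_neg (by linarith)]
    nlinarith [sq_nonneg (b.re * x + c.re)]
  have hint := (integrable_rpow_mul_exp_neg_mul_sq (b := -b.re / 2) (by linarith)
    (s := n) (by linarith [n.cast_nonneg (α := ℝ)])).norm.const_mul
    (Real.exp (-c.re ^ 2 / (2 * b.re)))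
  refine hint.mono' (by unfold gaussMonomial; fun_prop) (ae_of_all _ fun x => ?_)
  have hre : (b * (x : ℂ) ^ 2 + c * x).re
      = (b.re / 2 * x ^ 2 + c.re * x) + -(-b.re / 2) * x ^ 2 := by
    simp only [Complex.add_re, Complex.mul_re, ← Complex.ofReal_pow, Complex.ofReal_re,
      Complex.ofReal_im]
    ring
  rw [gaussMonomial, norm_mul, norm_pow, Complex.norm_exp, Complex.norm_real, Real.norm_eq_abs,
    norm_mul, Real.norm_of_nonneg (Real.exp_pos _).le, Real.rpow_natCast, norm_pow,
    Real.norm_eq_abs, hre, Real.exp_add]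
  calc |x| ^ n * (rexp (b.re / 2 * x ^ 2 + c.re * x) * rexp (-(-b.re / 2) * x ^ 2))
      = rexp (b.re / 2 * x ^ 2 + c.re * x) * (|x| ^ n * rexp (-(-b.re / 2) * x ^ 2)) := by ring
    _ ≤ _ := by gcongr; exact hmax x

lemma hasDerivAt_gaussMonomial (n : ℕ) (b c : ℂ) (x : ℝ) :
    HasDerivAt (gaussMonomial n b c) (n * gaussMonomial (n - 1) b c x + c * gaussMonomial n b c x
      + 2 * b * gaussMonomial (n + 1) b c x) x := by
  have hpow := (hasDerivAt_pow n (x : ℂ)).comp_ofReal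
  have hexp := (((hasDerivAt_pow 2 (x : ℂ)).const_mul b).fun_add
    ((hasDerivAt_id' (x : ℂ)).const_mul c)).cexp.comp_ofReal
  refine (hpow.fun_mul hexp).congr_deriv ?_
  simp only [gaussMonomial]
  ring

lemma exists_hasDerivAt_mem_gaussPoly {f : ℝ → ℂ} (hf : f ∈ gaussPoly) :
    ∃ f' ∈ gaussPoly, ∀ x, HasDerivAt f (f' x) x := by
  induction hf using Submodule.span_induction with
  | mem _ h =>
    obtain ⟨n, b, c, hb, rfl⟩ := h
    refine ⟨(n : ℂ) • gaussMonomial (n - 1) b c + c • gaussMonomial n b c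
      + (2 * b) • gaussMonomial (n + 1) b c, ?_, fun x => hasDerivAt_gaussMonomial n b c x⟩
    exact add_mem (add_mem (Submodule.smul_mem _ _ (gaussMonomial_mem hb _ _))
      (Submodule.smul_mem _ _ (gaussMonomial_mem hb _ _)))
      (Submodule.smul_mem _ _ (gaussMonomial_mem hb _ _))
  | zero => exact ⟨0, zero_mem _, fun x => hasDerivAt_const x 0⟩
  | add f g _ _ hf hg =>
    obtain ⟨f', hf'm, hf'⟩ := hf
    obtain ⟨g', hg'm, hg'⟩ := hg
    exact ⟨f' + g', add_mem hf'm hg'm, fun x => (hf' x).add (hg' x)⟩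
  | smul a f _ hf =>
    obtain ⟨f', hf'm, hf'⟩ := hf
    exact ⟨a • f', Submodule.smul_mem _ a hf'm, fun x => (hf' x).const_smul a⟩

lemma differentiable_of_mem_gaussPoly {f : ℝ → ℂ} (hf : f ∈ gaussPoly) :
    Differentiable ℝ f := by
  obtain ⟨f', -, hf'⟩ := exists_hasDerivAt_mem_gaussPoly hf
  exact fun x => (hf' x).differentiableAt

lemma deriv_mem_gaussPoly {f : ℝ → ℂ} (hf : f ∈ gaussPoly) : deriv f ∈ gaussPoly := by
  obtain ⟨f', hf'm, hf'⟩ := exists_hasDerivAt_mem_gaussPoly hf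
  rwa [show deriv f = f' from funext fun x => (hf' x).deriv]

lemma integrable_of_mem_gaussPoly {f : ℝ → ℂ} (hf : f ∈ gaussPoly) : Integrable f := by
  induction hf using Submodule.span_induction with
  | mem _ h =>
    obtain ⟨n, b, c, hb, rfl⟩ := h
    exact integrable_gaussMonomial hb n c
  | zero => exact integrable_zero _ _ _
  | add f g _ _ hf hg => exact hf.add hg
  | smul a f _ hf => exact hf.smul a

lemma InW.mem_gaussPoly {f : ℝ → ℂ} (hf : InW f) : f ∈ gaussPoly := by
  refine Submodule.span_le.2 ?_ hf
  rintro _ ⟨A, B, P, hA, rfl⟩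
  have hb : (-(A : ℂ) / 2).re < 0 := by simp; linarith
  have hsum : (fun x : ℝ => cexp (-(A : ℂ) * x ^ 2 / 2 + B * x) * P.eval (x : ℂ))
      = ∑ k ∈ Finset.range (P.natDegree + 1), P.coeff k • gaussMonomial k (-(A : ℂ) / 2) B := by
    funext x
    simp only [Finset.sum_apply, Pi.smul_apply, smul_eq_mul, gaussMonomial,
      Polynomial.eval_eq_sum_range, Finset.mul_sum]
    refine Finset.sum_congr rfl fun k _ => ?_
    ring_nf
  rw [SetLike.mem_coe, hsum]
  exact Submodule.sum_mem _ fun k _ => Submodule.smul_mem _ _ (gaussMonomial_mem hb k B)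

noncomputable def nextWidth (b : ℂ) : ℂ := π * I + π ^ 2 / b

noncomputable def nextShift (b c : ℂ) : ℂ := -(π * I * c / b)

noncomputable def gaussFactor (b c : ℂ) : ℂ :=
  (π / -b) ^ (1 / 2 : ℂ) * cexp (-(π * I / 12) - c ^ 2 / (4 * b))

lemma Atil_gaussMonomial_zero {b : ℂ} (hb : b.re < 0) (c : ℂ) :
    Atil (gaussMonomial 0 b c)
      = gaussFactor b c • gaussMonomial 0 (nextWidth b) (nextShift b c) := by
  have hb0 : b ≠ 0 := by rintro rfl; simp at hb
  funext β
  have h := integral_cexp_quadratic hb (c + 2 * π * I * β) 0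
  simp only [add_zero, zero_sub] at h
  have hint : ∀ α : ℝ, cexp (2 * π * I * α * β) * cexp (π * I * β ^ 2 - π * I / 12) *
      gaussMonomial 0 b c α = cexp (π * I * β ^ 2 - π * I / 12) *
      cexp (b * α ^ 2 + (c + 2 * π * I * β) * α) := by
    intro α
    simp only [gaussMonomial, pow_zero, one_mul, ← Complex.exp_add]
    ring_nf
  rw [Atil]
  simp_rw [hint]
  rw [integral_const_mul, h]
  simp only [Pi.smul_apply, smul_eq_mul, gaussMonomial, gaussFactor, nextWidth, nextShift,
    pow_zero, one_mul]
  rw [mul_left_comm, ← Complex.exp_add, mul_assoc ((π / -b : ℂ) ^ (1 / 2 : ℂ)),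
    ← Complex.exp_add]
  congr 2
  linear_combination (-π ^ 2 * β ^ 2 / b : ℂ) * I_sq

lemma nextWidth_eq (b : ℂ) : nextWidth b = π * I - (π * I) ^ 2 / b := by
  rw [nextWidth, mul_pow, I_sq]
  ring

lemma re_nextWidth_neg {b : ℂ} (hb : b.re < 0) : (nextWidth b).re < 0 := by
  have hb0 : b ≠ 0 := by rintro rfl; simp at hb
  rw [nextWidth, add_re, div_re, ← ofReal_pow, ofReal_re, ofReal_im]
  simp only [mul_re, ofReal_re, I_re, mul_zero, ofReal_im, I_im, mul_one, sub_self, zero_mul,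
    zero_add, zero_div, add_zero]
  exact div_neg_of_neg_of_pos (mul_neg_of_pos_of_neg (by positivity) hb) (normSq_pos.2 hb0)

lemma nextWidth_nextWidth {b : ℂ} (hb : b ≠ 0) (hbπ : b ≠ π * I) :
    nextWidth (nextWidth b) = (π * I) ^ 2 / (π * I - b) := by
  have hπ : (π * I : ℂ) ≠ 0 := by simp [Real.pi_ne_zero]
  have hsub : π * I - b ≠ 0 := sub_ne_zero.2 hbπ.symm
  rw [nextWidth_eq, nextWidth_eq]
  field_simp
  ring

lemma nextWidth_nextWidth_nextWidth {b : ℂ} (hb : b ≠ 0) (hbπ : b ≠ π * I) :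
    nextWidth (nextWidth (nextWidth b)) = b := by
  have hπ : (π * I : ℂ) ≠ 0 := by simp [Real.pi_ne_zero]
  have hsub : π * I - b ≠ 0 := sub_ne_zero.2 hbπ.symm
  rw [nextWidth_nextWidth hb hbπ, nextWidth_eq]
  field_simp
  ring

lemma nextShift_orbit {b : ℂ} (hb : b ≠ 0) (hbπ : b ≠ π * I) (c : ℂ) :
    nextShift (nextWidth (nextWidth b)) (nextShift (nextWidth b) (nextShift b c)) = c := by
  have hπ : (π * I : ℂ) ≠ 0 := by simp [Real.pi_ne_zero]
  have hsub : π * I - b ≠ 0 := sub_ne_zero.2 hbπ.symm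
  rw [nextWidth_nextWidth hb hbπ, nextShift, nextShift, nextShift, nextWidth_eq]
  field_simp
  ring

lemma sq_div_orbit {b : ℂ} (hb : b ≠ 0) (hbπ : b ≠ π * I) (c : ℂ) :
    c ^ 2 / (4 * b) + nextShift b c ^ 2 / (4 * nextWidth b)
      + nextShift (nextWidth b) (nextShift b c) ^ 2 / (4 * nextWidth (nextWidth b)) = 0 := by
  have hπ : (π * I : ℂ) ≠ 0 := by simp [Real.pi_ne_zero]
  have hsub : π * I - b ≠ 0 := sub_ne_zero.2 hbπ.symm
  rw [nextWidth_nextWidth hb hbπ, nextShift, nextShift, nextWidth_eq]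
  field_simp
  ring

lemma pi_div_neg_orbit {b : ℂ} (hb : b ≠ 0) (hbπ : b ≠ π * I) :
    (π / -b) * (π / -nextWidth b) * (π / -nextWidth (nextWidth b)) = I := by
  have hπ : (π : ℂ) ≠ 0 := by simp [Real.pi_ne_zero]
  have hsub : π * I - b ≠ 0 := sub_ne_zero.2 hbπ.symm
  rw [nextWidth_nextWidth hb hbπ, nextWidth_eq]
  field_simp
  rw [I_pow_four]
  ring

lemma re_pi_div_neg_pos {b : ℂ} (hb : b.re < 0) : 0 < (π / -b).re := by
  have hb0 : -b ≠ 0 := by rintro h; simp [neg_eq_zero.1 h] at hb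
  rw [div_eq_mul_inv, re_ofReal_mul, inv_re]
  exact mul_pos Real.pi_pos (div_pos (by simpa using hb) (normSq_pos.2 hb0))

/-- Each `arg zⱼ` lies in `(-π/2, π/2)`, so their sum, being `≡ π/2 (mod 2π)`, equals `π/2`. -/
lemma cpow_half_mul_cpow_half_mul_cpow_half {z₀ z₁ z₂ : ℂ} (h₀ : 0 < z₀.re) (h₁ : 0 < z₁.re)
    (h₂ : 0 < z₂.re) (h : z₀ * z₁ * z₂ = I) :
    z₀ ^ (1 / 2 : ℂ) * z₁ ^ (1 / 2 : ℂ) * z₂ ^ (1 / 2 : ℂ) = cexp (π * I / 4) := by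
  have hne : ∀ {z : ℂ}, 0 < z.re → z ≠ 0 := fun hz h0 => by simp [h0] at hz
  have harg : ∀ {z : ℂ}, 0 < z.re → |arg z| < π / 2 :=
    fun hz => abs_arg_lt_pi_div_two_iff.2 (Or.inl hz)
  set s := log z₀ + log z₁ + log z₂ with hs
  have hexp : cexp s = cexp (π / 2 * I) := by
    rw [hs, Complex.exp_add, Complex.exp_add, exp_log (hne h₀), exp_log (hne h₁),
      exp_log (hne h₂), h, exp_pi_div_two_mul_I]
  obtain ⟨n, hn⟩ := exp_eq_exp_iff_exists_int.1 hexp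
  have him : arg z₀ + arg z₁ + arg z₂ = π / 2 + n * (2 * π) := by
    simpa [hs, log_im] using congrArg Complex.im hn
  have hn0 : n = 0 := by
    have hlt : (n : ℝ) < 1 / 2 := by
      nlinarith [abs_lt.1 (harg h₀), abs_lt.1 (harg h₁), abs_lt.1 (harg h₂), Real.pi_pos]
    have hgt : (-1 : ℝ) < n := by
      nlinarith [abs_lt.1 (harg h₀), abs_lt.1 (harg h₁), abs_lt.1 (harg h₂), Real.pi_pos]
    have : n < 1 := by exact_mod_cast (by linarith : (n : ℝ) < 1)
    have : -1 < n := by exact_mod_cast hgt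
    omega
  rw [cpow_def_of_ne_zero (hne h₀), cpow_def_of_ne_zero (hne h₁), cpow_def_of_ne_zero (hne h₂),
    ← Complex.exp_add, ← Complex.exp_add]
  congr 1
  linear_combination (1 / 2 : ℂ) * (hn.trans (by simp [hn0]) : s = π / 2 * I)

lemma gaussFactor_orbit {b : ℂ} (hb : b.re < 0) (c : ℂ) :
    gaussFactor b c * gaussFactor (nextWidth b) (nextShift b c)
      * gaussFactor (nextWidth (nextWidth b)) (nextShift (nextWidth b) (nextShift b c)) = 1 := by
  have hb0 : b ≠ 0 := by rintro rfl; simp at hb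
  have hbπ : b ≠ π * I := by rintro rfl; simp at hb
  have hb₁ := re_nextWidth_neg hb
  have hroot := cpow_half_mul_cpow_half_mul_cpow_half (re_pi_div_neg_pos hb)
    (re_pi_div_neg_pos hb₁) (re_pi_div_neg_pos (re_nextWidth_neg hb₁))
    (pi_div_neg_orbit hb0 hbπ)
  have hexp : ∀ r₀ r₁ r₂ e₀ e₁ e₂ : ℂ, r₀ * cexp e₀ * (r₁ * cexp e₁) * (r₂ * cexp e₂)
      = r₀ * r₁ * r₂ * cexp (e₀ + e₁ + e₂) := by
    intros
    rw [Complex.exp_add, Complex.exp_add]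
    ring
  rw [gaussFactor, gaussFactor, gaussFactor, hexp, hroot, ← Complex.exp_add, ← Complex.exp_zero]
  congr 1
  linear_combination -sq_div_orbit hb0 hbπ c

lemma Atil_cube_gaussMonomial_zero {b : ℂ} (hb : b.re < 0) (c : ℂ) :
    Atil (Atil (Atil (gaussMonomial 0 b c))) = gaussMonomial 0 b c := by
  have hb0 : b ≠ 0 := by rintro rfl; simp at hb
  have hbπ : b ≠ π * I := by rintro rfl; simp at hb
  have hb₁ := re_nextWidth_neg hb
  rw [Atil_gaussMonomial_zero hb, Atil_smul, Atil_gaussMonomial_zero hb₁, Atil_smul, Atil_smul,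
    Atil_gaussMonomial_zero (re_nextWidth_neg hb₁), smul_smul, smul_smul,
    nextWidth_nextWidth_nextWidth hb0 hbπ, nextShift_orbit hb0 hbπ, gaussFactor_orbit hb,
    one_smul]

lemma Atil_mulX_of_mem {f : ℝ → ℂ} (hf : f ∈ gaussPoly) :
    Atil (mulX f) = (2 * π * I)⁻¹ • deriv (Atil f) - mulX (Atil f) :=
  Atil_mulX (integrable_of_mem_gaussPoly hf) (integrable_of_mem_gaussPoly (mulX_mem_gaussPoly hf))

lemma Atil_deriv_of_mem {f : ℝ → ℂ} (hf : f ∈ gaussPoly) :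
    Atil (deriv f) = -(2 * π * I) • mulX (Atil f) :=
  Atil_deriv (integrable_of_mem_gaussPoly hf) (differentiable_of_mem_gaussPoly hf)
    (integrable_of_mem_gaussPoly (deriv_mem_gaussPoly hf))

lemma Atil_add_of_mem {f g : ℝ → ℂ} (hf : f ∈ gaussPoly) (hg : g ∈ gaussPoly) :
    Atil (f + g) = Atil f + Atil g :=
  Atil_add (integrable_of_mem_gaussPoly hf) (integrable_of_mem_gaussPoly hg)

lemma Atil_gaussMonomial_mem {b : ℂ} (hb : b.re < 0) (n : ℕ) (c : ℂ) :
    Atil (gaussMonomial n b c) ∈ gaussPoly := by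
  induction n with
  | zero =>
    rw [Atil_gaussMonomial_zero hb]
    exact Submodule.smul_mem _ _ (gaussMonomial_mem (re_nextWidth_neg hb) 0 _)
  | succ n ih =>
    rw [← mulX_gaussMonomial, Atil_mulX_of_mem (gaussMonomial_mem hb n c)]
    exact sub_mem (Submodule.smul_mem _ _ (deriv_mem_gaussPoly ih)) (mulX_mem_gaussPoly ih)

lemma Atil_mem_gaussPoly {f : ℝ → ℂ} (hf : f ∈ gaussPoly) : Atil f ∈ gaussPoly := by
  induction hf using Submodule.span_induction with
  | mem _ h =>
    obtain ⟨n, b, c, hb, rfl⟩ := h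
    exact Atil_gaussMonomial_mem hb n c
  | zero => rw [Atil_zero]; exact zero_mem _
  | add f g hf hg hAf hAg => rw [Atil_add_of_mem hf hg]; exact add_mem hAf hAg
  | smul a f _ hAf => rw [Atil_smul]; exact Submodule.smul_mem _ a hAf

lemma Atil_cube_mulX {f : ℝ → ℂ} (hf : f ∈ gaussPoly) :
    Atil (Atil (Atil (mulX f))) = mulX (Atil (Atil (Atil f))) := by
  have hg := Atil_mem_gaussPoly hf
  have hh := Atil_mem_gaussPoly hg
  have h2πI : (2 * π * I : ℂ) ≠ 0 := by simp [Real.pi_ne_zero]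
  have hL : ∀ u v : ℝ → ℂ, (2 * π * I : ℂ)⁻¹ • -(2 * π * I) • u - ((2 * π * I)⁻¹ • v - u)
      = -(2 * π * I : ℂ)⁻¹ • v := by
    intro u v
    rw [smul_smul, mul_neg, inv_mul_cancel₀ h2πI]
    module
  rw [Atil_mulX_of_mem hf, Atil_sub (integrable_of_mem_gaussPoly
      (Submodule.smul_mem _ _ (deriv_mem_gaussPoly hg)))
      (integrable_of_mem_gaussPoly (mulX_mem_gaussPoly hg)),
    Atil_smul, Atil_deriv_of_mem hg, Atil_mulX_of_mem hg, hL, Atil_smul, Atil_deriv_of_mem hh,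
    smul_smul, neg_mul_neg, inv_mul_cancel₀ h2πI, one_smul]

lemma Atil_cube_gaussMonomial {b : ℂ} (hb : b.re < 0) (n : ℕ) (c : ℂ) :
    Atil (Atil (Atil (gaussMonomial n b c))) = gaussMonomial n b c := by
  induction n with
  | zero => exact Atil_cube_gaussMonomial_zero hb c
  | succ n ih => rw [← mulX_gaussMonomial, Atil_cube_mulX (gaussMonomial_mem hb n c), ih]

lemma Atil_cube_of_mem {f : ℝ → ℂ} (hf : f ∈ gaussPoly) : Atil (Atil (Atil f)) = f := by
  induction hf using Submodule.span_induction with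
  | mem _ h =>
    obtain ⟨n, b, c, hb, rfl⟩ := h
    exact Atil_cube_gaussMonomial hb n c
  | zero => rw [Atil_zero, Atil_zero, Atil_zero]
  | add f g hf hg hAf hAg =>
    have hf₁ := Atil_mem_gaussPoly hf
    have hg₁ := Atil_mem_gaussPoly hg
    rw [Atil_add_of_mem hf hg, Atil_add_of_mem hf₁ hg₁,
      Atil_add_of_mem (Atil_mem_gaussPoly hf₁) (Atil_mem_gaussPoly hg₁), hAf, hAg]
  | smul a f _ hAf => rw [Atil_smul, Atil_smul, Atil_smul, hAf]

/-- `Ã³ = id`: applying the Kashaev kernel transform three times to any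
Gaussian-polynomial test function returns the function. -/
theorem Atil_cube_eq_id (f : ℝ → ℂ) (hf : InW f) (β : ℝ) :
    Atil (Atil (Atil f)) β = f β := by
  rw [Atil_cube_of_mem hf.mem_gaussPoly]
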